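/- arXiv:2110.14362 — 2 statements merged into one kernel-verified Lean document; each statement's English description precedes it below -/
import Mathlib

section
/- Under the same assumptions, the second pressure virial theorem holds: ⟨P_ins V⟩ = P⟨V⟩ − k_BT, where ⟨·⟩ denotes the NPT ensemble average with weight exp(−βPV)Q(N,V,T)dV / Δ. -/
/-!
Integrate `d/dV [V e^{-βPV} Q(V)] = e^{-βPV} Q − βP · V e^{-βPV} Q + β · V e^{-βPV} Q A`
over `(0, ∞)`. The boundary terms vanish, so `0 = Δ − βP Δ ⟨V⟩ + β Δ ⟨P_ins V⟩`;
divide by `β Δ`.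
-/

open MeasureTheory Filter Topology Set

/-- Unlike `integral_Ioi_of_hasDerivAt_of_tendsto`, only a one-sided limit of `f` at `a` is
assumed; redefining `f a` as that limit reduces to the library version. -/
theorem integral_Ioi_of_hasDerivAt_of_tendsto_nhdsGT {E : Type*} [NormedAddCommGroup E]
    [NormedSpace ℝ E] [CompleteSpace E] {f f' : ℝ → E} {a : ℝ} {l m : E}
    (hderiv : ∀ x ∈ Ioi a, HasDerivAt f (f' x) x) (f'int : IntegrableOn f' (Ioi a))
    (hfa : Tendsto f (𝓝[>] a) (𝓝 l)) (hf : Tendsto f atTop (𝓝 m)) :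
    ∫ x in Ioi a, f' x = m - l := by
  classical
  have hcont : ContinuousWithinAt (Function.update f a l) (Ici a) a := by
    rwa [continuousWithinAt_update_same, ← Ioi_union_left, union_sdiff_cancel_right (by simp)]
  have hderiv' : ∀ x ∈ Ioi a, HasDerivAt (Function.update f a l) (f' x) x := fun x hx =>
    (hderiv x hx).congr_of_eventuallyEq <| (eventually_ne_nhds (ne_of_gt hx)).mono
      fun y hy => Function.update_of_ne hy _ _
  have hf' : Tendsto (Function.update f a l) atTop (𝓝 m) :=
    hf.congr' <| (eventually_ne_atTop a).mono fun y hy => (Function.update_of_ne hy _ _).symm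
  rw [integral_Ioi_of_hasDerivAt_of_tendsto hcont hderiv' f'int hf', Function.update_self]

theorem hasDerivAt_mul_exp_neg_mul_mul {Q A : ℝ → ℝ} {b c V : ℝ}
    (hQ : HasDerivAt Q (b * Q V * A V) V) :
    HasDerivAt (fun V => V * (Real.exp (-(c * V)) * Q V))
      (Real.exp (-(c * V)) * Q V - c * (Real.exp (-(c * V)) * Q V * V)
        + b * (Real.exp (-(c * V)) * Q V * A V * V)) V := by
  have hexp : HasDerivAt (fun V => Real.exp (-(c * V))) (Real.exp (-(c * V)) * -c) V := by
    simpa using ((hasDerivAt_id V).const_mul c).neg.exp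
  refine ((hasDerivAt_id' V).mul (hexp.mul hQ)).congr_deriv ?_
  rw [Pi.mul_apply]
  ring

theorem pressure_virial_theorem_second_general
    (β P kBT : ℝ) (hβ : 0 < β) (hkBT : kBT = 1 / β)
    (Q A : ℝ → ℝ)
    (hQderiv : ∀ V ∈ Set.Ioi (0 : ℝ), HasDerivAt Q (β * Q V * A V) V)
    (hint1 : IntegrableOn (fun V => Real.exp (-(β * P * V)) * Q V) (Set.Ioi 0))
    (hint2 : IntegrableOn (fun V => Real.exp (-(β * P * V)) * Q V * A V * V) (Set.Ioi 0))
    (hint3 : IntegrableOn (fun V => Real.exp (-(β * P * V)) * Q V * V) (Set.Ioi 0))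
    (h0 : Filter.Tendsto (fun V => V * (Real.exp (-(β * P * V)) * Q V))
      (nhdsWithin 0 (Set.Ioi 0)) (nhds 0))
    (hinf : Filter.Tendsto (fun V => V * (Real.exp (-(β * P * V)) * Q V))
      Filter.atTop (nhds 0))
    (Δ : ℝ) (hΔ : Δ = ∫ V in Set.Ioi (0 : ℝ), Real.exp (-(β * P * V)) * Q V)
    (hΔ0 : Δ ≠ 0) :
    (∫ V in Set.Ioi (0 : ℝ), Real.exp (-(β * P * V)) * Q V * A V * V) / Δ
      = P * ((∫ V in Set.Ioi (0 : ℝ), Real.exp (-(β * P * V)) * Q V * V) / Δ) - kBT := by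
  have hint13 : IntegrableOn
      (fun V => Real.exp (-(β * P * V)) * Q V - β * P * (Real.exp (-(β * P * V)) * Q V * V))
      (Ioi 0) :=
    hint1.sub (hint3.const_mul _)
  have hboundary := integral_Ioi_of_hasDerivAt_of_tendsto_nhdsGT
    (fun V hV => hasDerivAt_mul_exp_neg_mul_mul (hQderiv V hV))
    (hint13.add (hint2.const_mul β)) h0 hinf
  rw [integral_add hint13 (hint2.const_mul _), integral_sub hint1 (hint3.const_mul _),
    integral_const_mul, integral_const_mul, ← hΔ, sub_self] at hboundary
  generalize (∫ V in Ioi (0 : ℝ), Real.exp (-(β * P * V)) * Q V * A V * V) = I₂ at hboundary ⊢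
  generalize (∫ V in Ioi (0 : ℝ), Real.exp (-(β * P * V)) * Q V * V) = I₃ at hboundary ⊢
  rw [hkBT]
  field_simp
  linear_combination hboundary

/-- second pressure virial theorem `⟨P_ins V⟩ = P⟨V⟩ − k_BT`.
Same setting as the first virial theorem: `Q` is the canonical partition
function, `A V = ⟨P_ins⟩_NVT` characterized by `∂_V Q = β Q A`, and the NPT
average uses weight `e^{−βPV} Q(V) dV / Δ`, with
`V Q(V) e^{−βPV} → 0` at both endpoints. -/
theorem pressure_virial_theorem_second
    (β P kBT : ℝ) (hβ : 0 < β) (hP : 0 < P) (hkBT : kBT = 1 / β)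
    (Q A : ℝ → ℝ)
    (hQpos : ∀ V ∈ Set.Ioi (0 : ℝ), 0 < Q V)
    (hQderiv : ∀ V ∈ Set.Ioi (0 : ℝ), HasDerivAt Q (β * Q V * A V) V)
    (hint1 : IntegrableOn (fun V => Real.exp (-(β * P * V)) * Q V) (Set.Ioi 0))
    (hint2 : IntegrableOn (fun V => Real.exp (-(β * P * V)) * Q V * A V * V) (Set.Ioi 0))
    (hint3 : IntegrableOn (fun V => Real.exp (-(β * P * V)) * Q V * V) (Set.Ioi 0))
    (h0 : Filter.Tendsto (fun V => V * (Real.exp (-(β * P * V)) * Q V))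
      (nhdsWithin 0 (Set.Ioi 0)) (nhds 0))
    (hinf : Filter.Tendsto (fun V => V * (Real.exp (-(β * P * V)) * Q V))
      Filter.atTop (nhds 0))
    (Δ : ℝ) (hΔ : Δ = ∫ V in Set.Ioi (0 : ℝ), Real.exp (-(β * P * V)) * Q V)
    (hΔ0 : Δ ≠ 0) :
    (∫ V in Set.Ioi (0 : ℝ), Real.exp (-(β * P * V)) * Q V * A V * V) / Δ
      = P * ((∫ V in Set.Ioi (0 : ℝ), Real.exp (-(β * P * V)) * Q V * V) / Δ) - kBT :=
  pressure_virial_theorem_second_general β P kBT hβ hkBT Q A hQderiv hint1 hint2 hint3 h0 hinf Δ hΔ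
    hΔ0
end

section
/- (Extended-Hamiltonian marginal) Let ℋ(s, p^s, V, p^V) = Σ_i V^{-2/3}|p_i^s|²/(2m_i) + (p^V)²/(2M) + U(V^{1/3}s; V) + PV. Then under the measure exp(−βℋ) ds dp^s dV dp^V, the marginal distribution of (r, p, V) with r_i = V^{1/3}s_i, p_i = V^{-1/3}p_i^s (after integrating out p^V) is proportional to exp(−β(Σ_i |p_i|²/(2m_i) + U(r;V) + PV)) dr dp dV, i.e., the correct NPT distribution. -/
/-!
At fixed `V > 0` the substitution `r = V^{1/3} s`, `p = V^{-1/3} pˢ` scales the position and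
momentum factors of phase space by reciprocal factors, so by the scaling law of Haar measure it
preserves Lebesgue measure, and it turns `V^{-2/3} |pˢ|²` into `|p|²`. The extended weight is
therefore the Gaussian in `p^V` times the NPT weight at `(r, p, V)`, and Tonelli integrates out
`p^V`, producing the constant `c = √(2πM/β)`.
-/
open MeasureTheory
open scoped ENNReal

section Fubini

variable {α β γ : Type*} [MeasurableSpace α] [MeasurableSpace β] [MeasurableSpace γ]
  {μ : Measure α} {ν : Measure β} {ρ : Measure γ} [SFinite μ] [SFinite ν] [SFinite ρ]

theorem setLIntegral_prod_fst_snd_mem {f : α × β × γ → ℝ≥0∞} (hf : Measurable f) (s : Set β) :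
    ∫⁻ x in {x | x.2.1 ∈ s}, f x ∂(μ.prod (ν.prod ρ)) =
      ∫⁻ v in s, ∫⁻ w, ∫⁻ z, f (z, v, w) ∂μ ∂ρ ∂ν := by
  have hset : {x : α × β × γ | x.2.1 ∈ s} = Set.univ ×ˢ (s ×ˢ Set.univ) := by
    ext x; simp
  rw [hset, ← Measure.prod_restrict, ← Measure.prod_restrict, Measure.restrict_univ,
    Measure.restrict_univ, lintegral_prod_symm _ hf.aemeasurable, lintegral_prod]
  exact (hf.lintegral_prod_left').aemeasurable

theorem setLIntegral_prod_snd_snd_mem {f : α × β × γ → ℝ≥0∞} (hf : Measurable f) (s : Set γ) :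
    ∫⁻ y in {y | y.2.2 ∈ s}, f y ∂(μ.prod (ν.prod ρ)) =
      ∫⁻ v in s, ∫⁻ z, f (z.1, z.2, v) ∂(μ.prod ν) ∂ρ := by
  have hset : {y : α × β × γ | y.2.2 ∈ s} = Set.univ ×ˢ (Set.univ ×ˢ s) := by
    ext y; simp
  rw [hset, ← Measure.prod_restrict, ← Measure.prod_restrict, Measure.restrict_univ,
    Measure.restrict_univ, ← (measurePreserving_prodAssoc μ ν (ρ.restrict s)).lintegral_comp hf]
  exact lintegral_prod_symm _ (hf.comp MeasurableEquiv.prodAssoc.measurable).aemeasurable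

end Fubini

section Scaling

variable {E : Type*} [NormedAddCommGroup E] [NormedSpace ℝ E] [FiniteDimensional ℝ E]
  [MeasurableSpace E] [BorelSpace E] (μ : Measure E) [μ.IsAddHaarMeasure]

theorem measurePreserving_prodMap_smul_inv_smul {a : ℝ} (ha : a ≠ 0) :
    MeasurePreserving (Prod.map (a • ·) (a⁻¹ • ·)) (μ.prod μ) (μ.prod μ) := by
  refine ⟨(measurable_const_smul a).prodMap (measurable_const_smul a⁻¹), ?_⟩
  rw [← Measure.map_prod_map _ _ (measurable_const_smul a) (measurable_const_smul a⁻¹),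
    Measure.map_addHaar_smul μ ha, Measure.map_addHaar_smul μ (inv_ne_zero ha),
    Measure.prod_smul_left, Measure.prod_smul_right, smul_smul, ← ENNReal.ofReal_mul
    (abs_nonneg _), ← abs_mul, inv_pow, inv_inv, inv_mul_cancel₀ (pow_ne_zero _ ha), abs_one,
    ENNReal.ofReal_one, one_smul]

variable {γ : Type*} [MeasurableSpace γ] {ρ : Measure ℝ} {ν : Measure γ} [SFinite ρ] [SFinite ν]

theorem setLIntegral_mul_comp_smul_inv_smul {f : ℝ → ℝ} (hf : Measurable f) {s : Set ℝ}
    (hs : MeasurableSet s) (hfs : ∀ v ∈ s, f v ≠ 0) {g : γ → ℝ≥0∞} (hg : Measurable g)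
    {h : E × E × ℝ → ℝ≥0∞} (hh : Measurable h) :
    ∫⁻ x in {x | x.2.1 ∈ s}, g x.2.2 * h (f x.2.1 • x.1.1, (f x.2.1)⁻¹ • x.1.2, x.2.1)
        ∂((μ.prod μ).prod (ρ.prod ν)) =
      (∫⁻ w, g w ∂ν) * ∫⁻ y in {y | y.2.2 ∈ s}, h y ∂(μ.prod (μ.prod ρ)) := by
  have hh' : Measurable fun x : (E × E) × ℝ => h (x.1.1, x.1.2, x.2) :=
    hh.comp MeasurableEquiv.prodAssoc.measurable
  rw [setLIntegral_prod_fst_snd_mem (by fun_prop), setLIntegral_prod_snd_snd_mem hh,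
    ← lintegral_const_mul _ hh'.lintegral_prod_left']
  refine setLIntegral_congr_fun hs fun v hv => ?_
  have hpres := measurePreserving_prodMap_smul_inv_smul μ (hfs v hv)
  have hscaled : Measurable fun z : E × E => h (f v • z.1, (f v)⁻¹ • z.2, v) := by fun_prop
  simp_rw [lintegral_const_mul _ hscaled]
  rw [lintegral_mul_const _ hg]
  congr 1
  exact hpres.lintegral_comp (f := fun z : E × E => h (z.1, z.2, v)) (by fun_prop)

end Scaling

theorem lintegral_ofReal_exp_neg_mul_sq {b : ℝ} (hb : 0 < b) :
    ∫⁻ x : ℝ, ENNReal.ofReal (Real.exp (-b * x ^ 2)) = ENNReal.ofReal √(Real.pi / b) := by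
  rw [← ofReal_integral_eq_lintegral_ofReal (integrable_exp_neg_mul_sq hb)
    (ae_of_all _ fun x => (Real.exp_pos _).le), integral_gaussian]

section Kinetic

variable {ι κ : Type*} [Fintype ι] [Fintype κ]

noncomputable def kineticEnergy (m : ι → ℝ) (p : ι → κ → ℝ) : ℝ :=
  ∑ i, (∑ j, p i j ^ 2) / (2 * m i)

theorem continuous_kineticEnergy (m : ι → ℝ) : Continuous (kineticEnergy (κ := κ) m) := by
  unfold kineticEnergy; fun_prop

theorem kineticEnergy_smul (m : ι → ℝ) (a : ℝ) (p : ι → κ → ℝ) :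
    kineticEnergy m (a • p) = a ^ 2 * kineticEnergy m p := by
  simp only [kineticEnergy, Pi.smul_apply, smul_eq_mul, mul_pow, ← Finset.mul_sum, mul_div_assoc]

theorem sum_rpow_mul_div_eq_kineticEnergy (m : ι → ℝ) {V : ℝ} (hV : 0 ≤ V) (p : ι → κ → ℝ) :
    ∑ i, V ^ (-(2 : ℝ) / 3) * (∑ j, p i j ^ 2) / (2 * m i) =
      kineticEnergy m (V ^ (-(1 : ℝ) / 3) • p) := by
  rw [kineticEnergy_smul, ← Real.rpow_natCast, ← Real.rpow_mul hV, kineticEnergy,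
    Finset.mul_sum]
  norm_num [mul_div_assoc]

end Kinetic

theorem extended_hamiltonian_npt_marginal_general
    (N : ℕ) (m : Fin N → ℝ)
    (M β P : ℝ) (hM : 0 < M) (hβ : 0 < β)
    (U : (Fin N → Fin 3 → ℝ) → ℝ → ℝ)
    (hU : Measurable fun x : (Fin N → Fin 3 → ℝ) × ℝ => U x.1 x.2) :
    ∃ c : ℝ≥0∞, c ≠ 0 ∧ c ≠ ⊤ ∧
      ∀ φ : (Fin N → Fin 3 → ℝ) × (Fin N → Fin 3 → ℝ) × ℝ → ℝ≥0∞,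
        Measurable φ →
        (∫⁻ x : ((Fin N → Fin 3 → ℝ) × (Fin N → Fin 3 → ℝ)) × ℝ × ℝ in
            {x : ((Fin N → Fin 3 → ℝ) × (Fin N → Fin 3 → ℝ)) × ℝ × ℝ | 0 < x.2.1},
          ENNReal.ofReal (Real.exp (-β *
              ((∑ i, (x.2.1 ^ (-(2 : ℝ) / 3)) * (∑ j, (x.1.2 i j) ^ 2) / (2 * m i))
                + x.2.2 ^ 2 / (2 * M)
                + U (fun i => (x.2.1 ^ ((1 : ℝ) / 3)) • x.1.1 i) x.2.1
                + P * x.2.1)))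
            * φ (fun i => (x.2.1 ^ ((1 : ℝ) / 3)) • x.1.1 i,
                 fun i => (x.2.1 ^ (-(1 : ℝ) / 3)) • x.1.2 i,
                 x.2.1))
        = c * ∫⁻ y : (Fin N → Fin 3 → ℝ) × (Fin N → Fin 3 → ℝ) × ℝ in
            {y : (Fin N → Fin 3 → ℝ) × (Fin N → Fin 3 → ℝ) × ℝ | 0 < y.2.2},
          ENNReal.ofReal (Real.exp (-β *
              ((∑ i, (∑ j, (y.2.1 i j) ^ 2) / (2 * m i))
                + U y.1 y.2.2 + P * y.2.2))) * φ y := by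
  have hb : 0 < β / (2 * M) := by positivity
  refine ⟨ENNReal.ofReal √(Real.pi / (β / (2 * M))),
    (ENNReal.ofReal_pos.2 (Real.sqrt_pos.2 (by positivity))).ne', ENNReal.ofReal_ne_top,
    fun φ hφ => ?_⟩
  have hnpt : Measurable fun y : (Fin N → Fin 3 → ℝ) × (Fin N → Fin 3 → ℝ) × ℝ =>
      ENNReal.ofReal (Real.exp (-β * (kineticEnergy m y.2.1 + U y.1 y.2.2 + P * y.2.2))) *
        φ y := by
    have := continuous_kineticEnergy (κ := Fin 3) m
    have := hU.comp (measurable_fst.prodMk measurable_snd.snd :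
      Measurable fun y : (Fin N → Fin 3 → ℝ) × (Fin N → Fin 3 → ℝ) × ℝ => (y.1, y.2.2))
    fun_prop
  rw [← lintegral_ofReal_exp_neg_mul_sq hb]
  refine Eq.trans ?_ (setLIntegral_mul_comp_smul_inv_smul volume
    (f := fun V => V ^ ((1 : ℝ) / 3)) (by fun_prop) measurableSet_Ioi
    (fun V hV => (Real.rpow_pos_of_pos hV _).ne') (by fun_prop) hnpt)
  refine setLIntegral_congr_fun (measurableSet_lt measurable_const measurable_snd.fst) ?_
  rintro ⟨⟨s, p⟩, V, w⟩ (hV : 0 < V)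
  have hs : (fun i => V ^ ((1 : ℝ) / 3) • s i) = V ^ ((1 : ℝ) / 3) • s := rfl
  have hinv : V ^ (-(1 : ℝ) / 3) = (V ^ ((1 : ℝ) / 3))⁻¹ := by rw [neg_div, Real.rpow_neg hV.le]
  dsimp only
  rw [sum_rpow_mul_div_eq_kineticEnergy m hV.le, hinv, hs, ← mul_assoc,
    ← ENNReal.ofReal_mul (Real.exp_pos _).le, ← Real.exp_add, kineticEnergy]
  congr 3
  ring

/-- the extended Hamiltonian
`ℋ(s,pˢ,V,p^V) = Σ_i V^{-2/3}|p_iˢ|²/(2m_i) + (p^V)²/(2M) + U(V^{1/3}s;V) + PV`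
generates, under `exp(−βℋ) ds dpˢ dV dp^V`, the correct NPT marginal for
`(r,p,V)` with `r_i = V^{1/3}s_i`, `p_i = V^{-1/3}p_iˢ`: there is a constant
`c ∈ (0,∞)` (from integrating out `p^V`) such that for every measurable test
function `φ` of `(r,p,V)`, the extended-ensemble average equals `c` times the
average against `exp(−β(Σ|p_i|²/(2m_i) + U(r;V) + PV)) dr dp dV`. -/
theorem extended_hamiltonian_npt_marginal
    (N : ℕ) (m : Fin N → ℝ) (hm : ∀ i, 0 < m i)
    (M β P : ℝ) (hM : 0 < M) (hβ : 0 < β)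
    (U : (Fin N → Fin 3 → ℝ) → ℝ → ℝ)
    (hU : Measurable fun x : (Fin N → Fin 3 → ℝ) × ℝ => U x.1 x.2) :
    ∃ c : ℝ≥0∞, c ≠ 0 ∧ c ≠ ⊤ ∧
      ∀ φ : (Fin N → Fin 3 → ℝ) × (Fin N → Fin 3 → ℝ) × ℝ → ℝ≥0∞,
        Measurable φ →
        (∫⁻ x : ((Fin N → Fin 3 → ℝ) × (Fin N → Fin 3 → ℝ)) × ℝ × ℝ in
            {x : ((Fin N → Fin 3 → ℝ) × (Fin N → Fin 3 → ℝ)) × ℝ × ℝ | 0 < x.2.1},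
          ENNReal.ofReal (Real.exp (-β *
              ((∑ i, (x.2.1 ^ (-(2 : ℝ) / 3)) * (∑ j, (x.1.2 i j) ^ 2) / (2 * m i))
                + x.2.2 ^ 2 / (2 * M)
                + U (fun i => (x.2.1 ^ ((1 : ℝ) / 3)) • x.1.1 i) x.2.1
                + P * x.2.1)))
            * φ (fun i => (x.2.1 ^ ((1 : ℝ) / 3)) • x.1.1 i,
                 fun i => (x.2.1 ^ (-(1 : ℝ) / 3)) • x.1.2 i,
                 x.2.1))
        = c * ∫⁻ y : (Fin N → Fin 3 → ℝ) × (Fin N → Fin 3 → ℝ) × ℝ in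
            {y : (Fin N → Fin 3 → ℝ) × (Fin N → Fin 3 → ℝ) × ℝ | 0 < y.2.2},
          ENNReal.ofReal (Real.exp (-β *
              ((∑ i, (∑ j, (y.2.1 i j) ^ 2) / (2 * m i))
                + U y.1 y.2.2 + P * y.2.2))) * φ y :=
  extended_hamiltonian_npt_marginal_general N m M β P hM hβ U hU
end
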